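/- If T is a theory containing HA and PA is (Σ_k ∨ Π_k)-conservative over T, then T proves Σ_k-LEM. -/

import Mathlib

namespace SemiClassicalArith

/-- Terms of arithmetic: variables (de Bruijn indices) and function symbols
(one symbol of each arity for every code, covering all primitive recursive functions). -/
inductive Term : Type
  | var : ℕ → Term
  | func : (code : ℕ) → (arity : ℕ) → (Fin arity → Term) → Term

namespace Term

/-- Shift all variables `≥ d` up by one. -/
def lift (d : ℕ) : Term → Term
  | var n => if n < d then var n else var (n + 1)
  | func c a ts => func c a fun i => (ts i).lift d

/-- Binder-removing substitution of `s` for variable `k`. -/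
def subst (k : ℕ) (s : Term) : Term → Term
  | var n => if n < k then var n else if n = k then s else var (n - 1)
  | func c a ts => func c a fun i => Term.subst k s (ts i)

/-- In-place replacement of variable `k` by `s` (no shifting of other variables). -/
def repl (k : ℕ) (s : Term) : Term → Term
  | var n => if n = k then s else var n
  | func c a ts => func c a fun i => Term.repl k s (ts i)

/-- Free variables of a term. -/
def fv : Term → Finset ℕ
  | var n => {n}
  | func _ _ ts => Finset.univ.sup fun i => (ts i).fv

/-- The constant zero (function symbol of arity 0, code 0). -/
def zero : Term := func 0 0 (fun i => i.elim0)

/-- Successor (function symbol of arity 1, code 1). -/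
def succ (t : Term) : Term := func 1 1 (fun _ => t)

end Term

/-- Formulas of arithmetic in the language with an extra nullary predicate
symbol `$` (`dollar`), used as a place holder. Quantifiers use de Bruijn indices. -/
inductive Formula : Type
  | falsum : Formula
  | dollar : Formula
  | eq : Term → Term → Formula
  | and : Formula → Formula → Formula
  | or : Formula → Formula → Formula
  | imp : Formula → Formula → Formula
  | all : Formula → Formula
  | ex : Formula → Formula

namespace Formula

def neg (φ : Formula) : Formula := φ.imp falsum

def iff (φ ψ : Formula) : Formula := (φ.imp ψ).and (ψ.imp φ)

/-- `¬_$ φ`, i.e. `φ → $`. -/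
def negD (φ : Formula) : Formula := φ.imp dollar

def lift (d : ℕ) : Formula → Formula
  | falsum => falsum
  | dollar => dollar
  | eq t u => eq (t.lift d) (u.lift d)
  | and φ ψ => and (φ.lift d) (ψ.lift d)
  | or φ ψ => or (φ.lift d) (ψ.lift d)
  | imp φ ψ => imp (φ.lift d) (ψ.lift d)
  | all φ => all (φ.lift (d + 1))
  | ex φ => ex (φ.lift (d + 1))

/-- Binder-removing substitution of term `s` for variable `k`. -/
def subst (k : ℕ) (s : Term) : Formula → Formula
  | falsum => falsum
  | dollar => dollar
  | eq t u => eq (Term.subst k s t) (Term.subst k s u)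
  | and φ ψ => and (Formula.subst k s φ) (Formula.subst k s ψ)
  | or φ ψ => or (Formula.subst k s φ) (Formula.subst k s ψ)
  | imp φ ψ => imp (Formula.subst k s φ) (Formula.subst k s ψ)
  | all φ => all (Formula.subst (k + 1) (s.lift 0) φ)
  | ex φ => ex (Formula.subst (k + 1) (s.lift 0) φ)

/-- In-place replacement of variable `k` by term `s`. -/
def repl (k : ℕ) (s : Term) : Formula → Formula
  | falsum => falsum
  | dollar => dollar
  | eq t u => eq (Term.repl k s t) (Term.repl k s u)
  | and φ ψ => and (Formula.repl k s φ) (Formula.repl k s ψ)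
  | or φ ψ => or (Formula.repl k s φ) (Formula.repl k s ψ)
  | imp φ ψ => imp (Formula.repl k s φ) (Formula.repl k s ψ)
  | all φ => all (Formula.repl (k + 1) (s.lift 0) φ)
  | ex φ => ex (Formula.repl (k + 1) (s.lift 0) φ)

/-- Free variables of a formula. -/
def fv : Formula → Finset ℕ
  | falsum => ∅
  | dollar => ∅
  | eq t u => t.fv ∪ u.fv
  | and φ ψ => φ.fv ∪ ψ.fv
  | or φ ψ => φ.fv ∪ ψ.fv
  | imp φ ψ => φ.fv ∪ ψ.fv
  | all φ => (φ.fv.erase 0).image (· - 1)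
  | ex φ => (φ.fv.erase 0).image (· - 1)

/-- A sentence is a formula with no free variables. -/
def sentence (φ : Formula) : Prop := φ.fv = ∅

/-- The formula is in the language of `HA` (the placeholder `$` does not occur). -/
def noDollar : Formula → Prop
  | falsum => True
  | dollar => False
  | eq _ _ => True
  | and φ ψ => φ.noDollar ∧ ψ.noDollar
  | or φ ψ => φ.noDollar ∧ ψ.noDollar
  | imp φ ψ => φ.noDollar ∧ ψ.noDollar
  | all φ => φ.noDollar
  | ex φ => φ.noDollar

/-- Quantifier-free formula of `HA`. -/
def isQF : Formula → Prop
  | falsum => True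
  | dollar => False
  | eq _ _ => True
  | and φ ψ => φ.isQF ∧ ψ.isQF
  | or φ ψ => φ.isQF ∧ ψ.isQF
  | imp φ ψ => φ.isQF ∧ ψ.isQF
  | all _ => False
  | ex _ => False

/-- Flip `+`/`-` in an alternation path (`true` = `+`, `false` = `-`). -/
def pflip (s : List Bool) : List Bool := s.map (!·)

/-- The set of alternation paths of a formula (Akama–Berardi–Hayashi–Kohlenbach). -/
def alt : Formula → Finset (List Bool)
  | falsum => {([] : List Bool)}
  | dollar => {([] : List Bool)}
  | eq _ _ => {([] : List Bool)}
  | and φ ψ => φ.alt ∪ ψ.alt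
  | or φ ψ => φ.alt ∪ ψ.alt
  | imp φ ψ => φ.alt.image pflip ∪ ψ.alt
  | all φ => φ.alt.image (fun s => if s.head? = some false then s else false :: s)
  | ex φ => φ.alt.image (fun s => if s.head? = some true then s else true :: s)

/-- The degree of a formula: the maximal length of its alternation paths. -/
def degree (φ : Formula) : ℕ := φ.alt.sup List.length

/-- The class `U_k` (for `k ≥ 1`: degree `k` and all maximal paths begin with `-`;
`U_0` is the class of degree-`0` formulas). -/
def inU (k : ℕ) (φ : Formula) : Prop :=
  φ.degree = k ∧ ∀ s ∈ φ.alt, s.length = k → k = 0 ∨ s.head? = some false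

/-- The class `E_k` (for `k ≥ 1`: degree `k` and all maximal paths begin with `+`;
`E_0` is the class of degree-`0` formulas). -/
def inE (k : ℕ) (φ : Formula) : Prop :=
  φ.degree = k ∧ ∀ s ∈ φ.alt, s.length = k → k = 0 ∨ s.head? = some true

/-- The dual of a prenex formula: swap quantifiers and negate the matrix. -/
def dual : Formula → Formula
  | all φ => ex φ.dual
  | ex φ => all φ.dual
  | φ => φ.neg

/-- The `$`-translation (Ishihara's generalized negative translation). -/
def dollarTr : Formula → Formula
  | falsum => dollar
  | dollar => dollar
  | eq t u => (eq t u).negD.negD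
  | and φ ψ => and φ.dollarTr ψ.dollarTr
  | or φ ψ => (or φ.dollarTr ψ.dollarTr).negD.negD
  | imp φ ψ => imp φ.dollarTr ψ.dollarTr
  | all φ => all φ.dollarTr
  | ex φ => (ex φ.dollarTr).negD.negD

/-- The Friedman A-translation: replace every prime formula `P` (including `⊥`)
by `P ∨ *` (here `*` is the placeholder `dollar`). -/
def aTr : Formula → Formula
  | falsum => or falsum dollar
  | dollar => dollar
  | eq t u => or (eq t u) dollar
  | and φ ψ => and φ.aTr ψ.aTr
  | or φ ψ => or φ.aTr ψ.aTr
  | imp φ ψ => imp φ.aTr ψ.aTr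
  | all φ => all φ.aTr
  | ex φ => ex φ.aTr

/-- Prefix `n` universal quantifiers. -/
def allN : Formula → ℕ → Formula
  | φ, 0 => φ
  | φ, n + 1 => Formula.allN φ.all n

/-- The universal closure of a formula. -/
def univClosure (φ : Formula) : Formula := φ.allN (φ.fv.sup Nat.succ)

end Formula

mutual
  /-- The class `Σ_k` of prenex formulas. -/
  inductive IsSigma : ℕ → Formula → Prop
    | qf {φ : Formula} : φ.isQF → IsSigma 0 φ
    | ofPi {k : ℕ} {φ : Formula} : IsPi k φ → IsSigma (k + 1) φ
    | ex {k : ℕ} {φ : Formula} : IsSigma (k + 1) φ → IsSigma (k + 1) φ.ex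
  /-- The class `Π_k` of prenex formulas. -/
  inductive IsPi : ℕ → Formula → Prop
    | qf {φ : Formula} : φ.isQF → IsPi 0 φ
    | ofSigma {k : ℕ} {φ : Formula} : IsSigma k φ → IsPi (k + 1) φ
    | all {k : ℕ} {φ : Formula} : IsPi (k + 1) φ → IsPi (k + 1) φ.all
end

/-- Axioms of Heyting arithmetic `HA` (Hilbert style intuitionistic predicate logic
with equality, plus arithmetical axioms and the induction scheme). -/
inductive HAAx : Formula → Prop
  | axK (φ ψ : Formula) : HAAx (φ.imp (ψ.imp φ))
  | axS (φ ψ χ : Formula) : HAAx ((φ.imp (ψ.imp χ)).imp ((φ.imp ψ).imp (φ.imp χ)))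
  | andI (φ ψ : Formula) : HAAx (φ.imp (ψ.imp (φ.and ψ)))
  | andE1 (φ ψ : Formula) : HAAx ((φ.and ψ).imp φ)
  | andE2 (φ ψ : Formula) : HAAx ((φ.and ψ).imp ψ)
  | orI1 (φ ψ : Formula) : HAAx (φ.imp (φ.or ψ))
  | orI2 (φ ψ : Formula) : HAAx (ψ.imp (φ.or ψ))
  | orE (φ ψ χ : Formula) : HAAx ((φ.imp χ).imp ((ψ.imp χ).imp ((φ.or ψ).imp χ)))
  | efq (φ : Formula) : HAAx (Formula.falsum.imp φ)
  | allE (φ : Formula) (t : Term) : HAAx (φ.all.imp (φ.subst 0 t))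
  | exI (φ : Formula) (t : Term) : HAAx ((φ.subst 0 t).imp φ.ex)
  | allK (φ ψ : Formula) : HAAx ((φ.imp ψ).all.imp (φ.all.imp ψ.all))
  | allVac (φ : Formula) : HAAx (φ.imp (φ.lift 0).all)
  | exE (φ ψ : Formula) : HAAx ((φ.imp (ψ.lift 0)).all.imp (φ.ex.imp ψ))
  | eqRefl (t : Term) : HAAx (Formula.eq t t)
  | eqSubst (t u : Term) (φ : Formula) : HAAx ((Formula.eq t u).imp ((φ.subst 0 t).imp (φ.subst 0 u)))
  | succNeZero (t : Term) : HAAx (Formula.neg (Formula.eq (Term.succ t) Term.zero))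
  | succInj (t u : Term) : HAAx ((Formula.eq (Term.succ t) (Term.succ u)).imp (Formula.eq t u))
  | ind (φ : Formula) : HAAx ((φ.subst 0 Term.zero).imp
      ((((φ.imp (φ.repl 0 (Term.succ (Term.var 0))))).all).imp φ.all))
  | atomDec (t u : Term) : HAAx ((Formula.eq t u).or (Formula.eq t u).neg)

/-- Provability from `HA` (in the language possibly containing `$`)
together with the extra axioms `T`. -/
inductive Proves (T : Set Formula) : Formula → Prop
  | ax {φ : Formula} : φ ∈ T → Proves T φ
  | ha {φ : Formula} : HAAx φ → Proves T φ
  | mp {φ ψ : Formula} : Proves T (φ.imp ψ) → Proves T φ → Proves T ψ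
  | gen {φ : Formula} : Proves T φ → Proves T φ.all

/-- The scheme `Σ_k-LEM`. -/
def sigLEM (k : ℕ) : Set Formula := {ψ | ∃ φ : Formula, IsSigma k φ ∧ ψ = φ.or φ.neg}

/-- The full law of excluded middle for `HA`-formulas; `Proves lemSet` is `PA`-provability. -/
def lemSet : Set Formula := {ψ | ∃ φ : Formula, φ.noDollar ∧ ψ = φ.or φ.neg}

/-- The scheme `F_k-LEM`: excluded middle for `HA`-formulas of degree at most `k`. -/
def fLEM (k : ℕ) : Set Formula :=
  {ψ | ∃ φ : Formula, φ.noDollar ∧ φ.degree ≤ k ∧ ψ = φ.or φ.neg}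

/-- `T` is (the set of extra axioms of) a semi-classical arithmetic:
`HA ⊆ HA + T ⊆ PA`, i.e. all axioms are `HA`-formulas provable in `PA`. -/
def IsSemiClassical (T : Set Formula) : Prop :=
  ∀ φ ∈ T, φ.noDollar ∧ Proves lemSet φ

mutual
  /-- The class `ℛ_{k+1}` (index `k` denotes `ℛ_{k+1}`). -/
  inductive Rcl : ℕ → Formula → Prop
    | base {k : ℕ} {φ : Formula} : φ.degree ≤ k → φ.noDollar → Rcl k φ
    | and {k : ℕ} {φ ψ : Formula} : Rcl k φ → Rcl k ψ → Rcl k (φ.and ψ)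
    | or {k : ℕ} {φ ψ : Formula} : Rcl k φ → Rcl k ψ → Rcl k (φ.or ψ)
    | all {k : ℕ} {φ : Formula} : Rcl k φ → Rcl k φ.all
    | imp {k : ℕ} {φ ψ : Formula} : Jcl k φ → Rcl k ψ → Rcl k (φ.imp ψ)
  /-- The class `𝒥_{k+1}` (index `k` denotes `𝒥_{k+1}`). -/
  inductive Jcl : ℕ → Formula → Prop
    | base {k : ℕ} {φ : Formula} : φ.degree ≤ k → φ.noDollar → Jcl k φ
    | and {k : ℕ} {φ ψ : Formula} : Jcl k φ → Jcl k ψ → Jcl k (φ.and ψ)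
    | or {k : ℕ} {φ ψ : Formula} : Jcl k φ → Jcl k ψ → Jcl k (φ.or ψ)
    | ex {k : ℕ} {φ : Formula} : Jcl k φ → Jcl k φ.ex
    | imp {k : ℕ} {φ ψ : Formula} : Rcl k φ → Jcl k ψ → Jcl k (φ.imp ψ)
end

/-- The class `𝒬_{k+1}` (index `k` denotes `𝒬_{k+1}`): generated from prime formulas by
`∧, ∨, ∀, ∃` and implications `J → Q` with `J ∈ 𝒥_{k+1}`. -/
inductive Qcl : ℕ → Formula → Prop
  | falsum {k : ℕ} : Qcl k Formula.falsum
  | eq {k : ℕ} {t u : Term} : Qcl k (Formula.eq t u)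
  | and {k : ℕ} {φ ψ : Formula} : Qcl k φ → Qcl k ψ → Qcl k (φ.and ψ)
  | or {k : ℕ} {φ ψ : Formula} : Qcl k φ → Qcl k ψ → Qcl k (φ.or ψ)
  | all {k : ℕ} {φ : Formula} : Qcl k φ → Qcl k φ.all
  | ex {k : ℕ} {φ : Formula} : Qcl k φ → Qcl k φ.ex
  | imp {k : ℕ} {φ ψ : Formula} : Jcl k φ → Qcl k ψ → Qcl k (φ.imp ψ)

/-- The class `𝒱_{k+1}` (index `k` denotes `𝒱_{k+1}`): generated from `𝒥_{k+1}` by `∧, ∀`. -/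
inductive Vcl : ℕ → Formula → Prop
  | ofJ {k : ℕ} {φ : Formula} : Jcl k φ → Vcl k φ
  | and {k : ℕ} {φ ψ : Formula} : Vcl k φ → Vcl k ψ → Vcl k (φ.and ψ)
  | all {k : ℕ} {φ : Formula} : Vcl k φ → Vcl k φ.all

/-- The class `EΠ_k`: generated from `Π_k` formulas by `∨` and `∀`. -/
inductive EPi (k : ℕ) : Formula → Prop
  | ofPi {φ : Formula} : IsPi k φ → EPi k φ
  | or {φ ψ : Formula} : EPi k φ → EPi k ψ → EPi k (φ.or ψ)
  | all {φ : Formula} : EPi k φ → EPi k φ.all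

/-- The class `EΣ_{k+1}` (index `k` denotes `EΣ_{k+1}`): existential quantifications
of `EΠ_k` formulas. -/
inductive ESig (k : ℕ) : Formula → Prop
  | ofEPi {φ : Formula} : EPi k φ → ESig k φ
  | ex {φ : Formula} : ESig k φ → ESig k φ.ex

/-- The scheme `Γ-DNEC`: universal closure of `¬¬φ` implies universal closure of `φ`. -/
def dnecSet (Γ : Set Formula) : Set Formula :=
  {ψ | ∃ φ ∈ Γ, ψ = (φ.neg.neg.univClosure).imp φ.univClosure}

/-- The scheme `Γ-DNSC`: universal closure of `¬¬φ` implies `¬¬` of the universal closure. -/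
def dnscSet (Γ : Set Formula) : Set Formula :=
  {ψ | ∃ φ ∈ Γ, ψ = (φ.neg.neg.univClosure).imp φ.univClosure.neg.neg}

/-- Double-negation elimination for sentences in `Γ`. -/
def dneSentSet (Γ : Set Formula) : Set Formula :=
  {ψ | ∃ φ ∈ Γ, φ.sentence ∧ ψ = φ.neg.neg.imp φ}


/-! The prenex dual `φ^⊥` of a `Σ_k` formula is a `Π_k` formula with `PA ⊢ φ ∨ φ^⊥`, so
conservativity gives `T ⊢ φ ∨ φ^⊥`; since already `HA ⊢ φ^⊥ → ¬φ`, this yields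
`T ⊢ φ ∨ ¬φ`. -/

open Formula

theorem Term.subst_var_lift_succ (t : Term) (d : ℕ) :
    Term.subst d (Term.var d) (t.lift (d + 1)) = t := by
  induction t with
  | var n =>
    by_cases h : n < d + 1
    · by_cases h' : n < d
      · simp [Term.lift, Term.subst, h, h']
      · obtain rfl : n = d := by omega
        simp [Term.lift, Term.subst]
    · have h₁ : ¬n + 1 < d := by omega
      have h₂ : n + 1 ≠ d := by omega
      simp [Term.lift, Term.subst, h, h₁, h₂]
  | func c a ts ih => simp only [Term.lift, Term.subst, ih]

theorem Formula.subst_var_lift_succ (φ : Formula) (d : ℕ) :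
    Formula.subst d (Term.var d) (φ.lift (d + 1)) = φ := by
  induction φ generalizing d with
  | falsum | dollar => rfl
  | eq t u => simp only [Formula.lift, Formula.subst, Term.subst_var_lift_succ]
  | and φ ψ ihφ ihψ | or φ ψ ihφ ihψ | imp φ ψ ihφ ihψ =>
    simp only [Formula.lift, Formula.subst, ihφ, ihψ]
  | all φ ih | ex φ ih =>
    simp only [Formula.lift, Formula.subst, Term.lift, if_neg (Nat.not_lt_zero d), ih]

theorem Formula.noDollar_dual : ∀ {φ : Formula}, φ.noDollar → φ.dual.noDollar
  | .falsum, h | .dollar, h | .eq _ _, h | .and _ _, h | .or _ _, h | .imp _ _, h =>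
    ⟨h, trivial⟩
  | .all φ, h | .ex φ, h => noDollar_dual (φ := φ) h

theorem Formula.isQF.dual_eq_neg : ∀ {φ : Formula}, φ.isQF → φ.dual = φ.neg
  | .falsum, _ | .dollar, _ | .eq _ _, _ | .and _ _, _ | .or _ _, _ | .imp _ _, _ => rfl

theorem Formula.isQF.noDollar : ∀ {φ : Formula}, φ.isQF → φ.noDollar
  | .falsum, _ | .eq _ _, _ => trivial
  | .and _ _, ⟨h₁, h₂⟩ | .or _ _, ⟨h₁, h₂⟩ | .imp _ _, ⟨h₁, h₂⟩ => ⟨h₁.noDollar, h₂.noDollar⟩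

mutual

theorem IsSigma.noDollar : ∀ {k : ℕ} {φ : Formula}, IsSigma k φ → φ.noDollar
  | _, _, .qf h => h.noDollar
  | _, _, .ofPi h => h.noDollar
  | _, _, .ex h => h.noDollar

theorem IsPi.noDollar : ∀ {k : ℕ} {φ : Formula}, IsPi k φ → φ.noDollar
  | _, _, .qf h => h.noDollar
  | _, _, .ofSigma h => h.noDollar
  | _, _, .all h => h.noDollar

end

mutual

theorem IsSigma.dual : ∀ {k : ℕ} {φ : Formula}, IsSigma k φ → IsPi k φ.dual
  | _, _, .qf h => h.dual_eq_neg ▸ IsPi.qf ⟨h, trivial⟩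
  | _, _, .ofPi h => .ofSigma h.dual
  | _, _, .ex h => .all h.dual

theorem IsPi.dual : ∀ {k : ℕ} {φ : Formula}, IsPi k φ → IsSigma k φ.dual
  | _, _, .qf h => h.dual_eq_neg ▸ IsSigma.qf ⟨h, trivial⟩
  | _, _, .ofSigma h => .ofPi h.dual
  | _, _, .all h => .ex h.dual

end

namespace Proves

variable {T : Set Formula} {φ ψ χ : Formula}

theorem imp_intro (h : Proves T ψ) : Proves T (φ.imp ψ) :=
  (ha (HAAx.axK ψ φ)).mp h

theorem imp_self (φ : Formula) : Proves T (φ.imp φ) :=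
  ((ha (HAAx.axS φ (φ.imp φ) φ)).mp (ha (HAAx.axK φ (φ.imp φ)))).mp (ha (HAAx.axK φ φ))

theorem postcomp (h : Proves T (ψ.imp χ)) : Proves T ((φ.imp ψ).imp (φ.imp χ)) :=
  (ha (HAAx.axS φ ψ χ)).mp h.imp_intro

theorem trans (h₁ : Proves T (φ.imp ψ)) (h₂ : Proves T (ψ.imp χ)) : Proves T (φ.imp χ) :=
  (postcomp h₂).mp h₁

theorem imp_comm (h : Proves T (φ.imp (ψ.imp χ))) : Proves T (ψ.imp (φ.imp χ)) :=
  (ha (HAAx.axK ψ φ)).trans ((ha (HAAx.axS φ ψ χ)).mp h)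

theorem absurd (φ ψ : Formula) : Proves T (φ.imp (φ.neg.imp ψ)) :=
  imp_comm (postcomp (ha (HAAx.efq ψ)))

theorem or_elim (h : Proves T (φ.or ψ)) (h₁ : Proves T (φ.imp χ))
    (h₂ : Proves T (ψ.imp χ)) : Proves T χ :=
  (((ha (HAAx.orE φ ψ χ)).mp h₁).mp h₂).mp h

theorem or_comm (h : Proves T (φ.or ψ)) : Proves T (ψ.or φ) :=
  h.or_elim (ha (HAAx.orI2 ψ φ)) (ha (HAAx.orI1 ψ φ))

theorem all_mono (h : Proves T (φ.imp ψ)) : Proves T (φ.all.imp ψ.all) :=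
  (ha (HAAx.allK φ ψ)).mp h.gen


theorem all_lift_imp (φ : Formula) : Proves T ((all (φ.lift 1)).imp φ) := by
  simpa only [Formula.subst_var_lift_succ φ 0] using
    ha (T := T) (HAAx.allE (φ.lift 1) (Term.var 0))

theorem imp_ex_lift (φ : Formula) : Proves T (φ.imp (ex (φ.lift 1))) := by
  simpa only [Formula.subst_var_lift_succ φ 0] using
    ha (T := T) (HAAx.exI (φ.lift 1) (Term.var 0))

theorem not_ex_imp_all (h : Proves T (φ.or ψ)) :
    Proves T ((ex φ).neg.imp (all ψ)) := by
  have hψ : Proves T ((ex (φ.lift 1)).neg.imp ψ) :=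
    h.or_elim ((imp_ex_lift φ).trans (absurd _ ψ)) (ha (HAAx.axK ψ _))
  exact (ha (HAAx.allVac (ex φ).neg)).trans hψ.all_mono

theorem dual_imp_neg : ∀ φ : Formula, Proves T (φ.dual.imp φ.neg)
  | .falsum | .dollar | .eq _ _ | .and _ _ | .or _ _ | .imp _ _ => imp_self _
  | .all φ =>
    have hφ : Proves T (φ.dual.imp (all (φ.lift 1)).neg) :=
      imp_comm ((all_lift_imp φ).trans (imp_comm (dual_imp_neg φ)))
    (ha (HAAx.exE φ.dual (all φ).neg)).mp hφ.gen
  | .ex φ => (dual_imp_neg φ).all_mono.trans (ha (HAAx.exE φ falsum))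

theorem or_dual_of_lem : ∀ {φ : Formula}, φ.noDollar → Proves lemSet (φ.or φ.dual)
  | .falsum, h | .dollar, h | .eq _ _, h | .and _ _, h | .or _ _, h | .imp _ _, h =>
    ax ⟨_, h, rfl⟩
  | .all φ, h =>
    have lem : Proves lemSet ((ex φ.dual).or (ex φ.dual).neg) :=
      ax ⟨_, noDollar_dual h, rfl⟩
    lem.or_elim (ha (HAAx.orI2 _ _))
      ((or_dual_of_lem (φ := φ) h).or_comm.not_ex_imp_all.trans (ha (HAAx.orI1 _ _)))
  | .ex φ, h =>
    have lem : Proves lemSet ((ex φ).or (ex φ).neg) := ax ⟨_, h, rfl⟩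
    lem.or_elim (ha (HAAx.orI1 _ _))
      ((or_dual_of_lem (φ := φ) h).not_ex_imp_all.trans (ha (HAAx.orI2 _ _)))

end Proves

/-- if `PA` is `(Σ_k ∨ Π_k)`-conservative over `T` (a theory
containing `HA`), then `T ⊢ Σ_k-LEM`. -/
theorem sigLEM_of_orConservative (k : ℕ) (T : Set Formula)
    (hcons : ∀ φ ψ : Formula, IsSigma k φ → IsPi k ψ →
      Proves lemSet (φ.or ψ) → Proves T (φ.or ψ)) :
    ∀ φ : Formula, IsSigma k φ → Proves T (φ.or φ.neg) := by
  intro φ hφ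
  have hT : Proves T (φ.or φ.dual) :=
    hcons φ φ.dual hφ hφ.dual (Proves.or_dual_of_lem hφ.noDollar)
  exact hT.or_elim (Proves.ha (HAAx.orI1 _ _))
    ((Proves.dual_imp_neg φ).trans (Proves.ha (HAAx.orI2 _ _)))

end SemiClassicalArith
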